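/- (Lemma 1) For T > 0 define the cumulative adsorbed fraction R(T) = 2 r_r D · [∫₀^∞ ((1 − e^{−iwT})/(iw))·conj(ψ(w)) dw + ∫₀^∞ ((e^{iwT} − 1)/(iw))·ψ(w) dw]. Assume (i) w ↦ Im(ψ(w))/w is Lebesgue integrable on (0,∞); (ii) ψ extends continuously to w = 0 with ψ(0) = 1/(4π r_0 D); and (iii) as T → ∞, ∫₀^∞ (sin z / z)·Re(ψ(z/T)) dz → (π/2)·(1/(4π r_0 D)) and ∫₀^∞ (cos z / z)·Im(ψ(z/T)) dz → 0. Then for any N_tx ∈ ℕ, N_tx·R(T) converges as T → ∞ to N_tx·r_r/(2 r_0) − 4 N_tx r_r D ∫₀^∞ Im(ψ(w))/w dw. -/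

import Mathlib

open MeasureTheory Filter

/-- `β(s) = 1/r_r + k₁ s/(D(s + k₋₁))`. -/
noncomputable def betaMC (D rr k1 km1 : ℝ) (z : ℂ) : ℂ :=
  1 / (rr : ℂ) + (k1 : ℂ) * z / ((D : ℂ) * (z + (km1 : ℂ)))

/-- `ψ(w) = (β(iw)/(β(iw)+√(iw/D))) e^{−(r₀−r_r)√(iw/D)} / (4π r₀ D)`. -/
noncomputable def psiMC (D rr r0 k1 km1 : ℝ) (w : ℝ) : ℂ :=
  (betaMC D rr k1 km1 (Complex.I * (w : ℂ)) /
      (betaMC D rr k1 km1 (Complex.I * (w : ℂ)) +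
        (Complex.I * (w : ℂ) / (D : ℂ)) ^ ((1 : ℂ) / 2))) *
    Complex.exp (-((r0 : ℂ) - (rr : ℂ)) * (Complex.I * (w : ℂ) / (D : ℂ)) ^ ((1 : ℂ) / 2)) /
    (4 * (Real.pi : ℂ) * (r0 : ℂ) * (D : ℂ))

/-- Cumulative adsorbed fraction
`R(T) = 2 r_r D [∫₀^∞ ((1−e^{−iwT})/(iw)) conj(ψ(w)) dw
              + ∫₀^∞ ((e^{iwT}−1)/(iw)) ψ(w) dw]`. -/
noncomputable def Rad (D rr r0 k1 km1 : ℝ) (T : ℝ) : ℂ :=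
  ((2 * rr * D : ℝ) : ℂ) *
    ((∫ w in Set.Ioi (0 : ℝ),
        ((1 - Complex.exp (-(Complex.I * (w : ℂ) * (T : ℂ)))) / (Complex.I * (w : ℂ))) *
          (starRingEnd ℂ) (psiMC D rr r0 k1 km1 w)) +
      ∫ w in Set.Ioi (0 : ℝ),
        ((Complex.exp (Complex.I * (w : ℂ) * (T : ℂ)) - 1) / (Complex.I * (w : ℂ))) *
          psiMC D rr r0 k1 km1 w)

/-!
Since the first integrand of `R(T)` is the complex conjugate of the second,
`R(T) = 4 r_r D · Re ∫₀^∞ ((e^{iwT} - 1)/(iw)) ψ(w) dw`. Taking the real part splits the integrand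
into `sin(wT)/w · Re ψ(w) + cos(wT)/w · Im ψ(w) - Im ψ(w)/w`, and the substitution `z = wT` turns
the first two pieces into the integrals of hypothesis (iii), whose limits give the result.

The splitting is legitimate because the kernel is bounded by `min(T, 2/w)` and `ψ` decays:
`β(iw)` and `√(iw/D) = √(w/2D) (1 + i)` both lie in the closed first quadrant, so
`|β/(β + √(iw/D))| ≤ 1` and `|ψ(w)| ≤ e^{-(r₀ - r_r)√(w/2D)}/(4π r₀ D)`.
-/

open Complex Set

-- `∫₀ᵀ e^{iwt} dt`
noncomputable def expKernel (T w : ℝ) : ℂ :=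
  (exp (I * w * T) - 1) / (I * w)

lemma measurable_expKernel (T : ℝ) : Measurable (expKernel T) := by
  unfold expKernel
  fun_prop

lemma norm_expKernel_le_abs (T w : ℝ) : ‖expKernel T w‖ ≤ |T| := by
  rcases eq_or_ne w 0 with rfl | hw
  · simp [expKernel]
  have h := Real.norm_exp_I_mul_ofReal_sub_one_le (x := w * T)
  rw [expKernel, norm_div, div_le_iff₀ (by simpa using hw), mul_assoc, ← ofReal_mul]
  calc _ ≤ ‖w * T‖ := h
    _ = |T| * ‖I * w‖ := by simp [mul_comm]

lemma norm_expKernel_le_two_div (T w : ℝ) : ‖expKernel T w‖ ≤ 2 / |w| := by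
  rw [expKernel, norm_div, show ‖I * (w : ℂ)‖ = |w| by simp]
  gcongr
  calc ‖exp (I * w * T) - 1‖ ≤ ‖exp (I * w * T)‖ + ‖(1 : ℂ)‖ := norm_sub_le _ _
      _ = 2 := by
        rw [show I * w * T = ((w * T : ℝ) : ℂ) * I by push_cast; ring, norm_exp_ofReal_mul_I]
        norm_num

lemma re_expKernel_mul (T w : ℝ) (z : ℂ) :
    (expKernel T w * z).re =
      Real.sin (T * w) / w * z.re + Real.cos (T * w) / w * z.im - z.im / w := by
  rcases eq_or_ne w 0 with rfl | hw
  · simp [expKernel]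
  have hw' : (w : ℂ) ≠ 0 := ofReal_ne_zero.2 hw
  have hK : expKernel T w = ((Real.sin (T * w) / w : ℝ) : ℂ) +
      (((1 - Real.cos (T * w)) / w : ℝ) : ℂ) * I := by
    rw [expKernel, div_eq_iff (mul_ne_zero I_ne_zero hw'),
      show I * w * T = ((T * w : ℝ) : ℂ) * I by push_cast; ring, exp_mul_I]
    push_cast
    field_simp
    linear_combination (cos (T * w) - 1) * I_sq
  rw [hK]
  simp only [mul_re, mul_im, add_re, add_im, ofReal_re, ofReal_im, I_re, I_im]
  ring

lemma expKernel_conj (T w : ℝ) (z : ℂ) :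
    (1 - exp (-(I * w * T))) / (I * w) * (starRingEnd ℂ) z =
      (starRingEnd ℂ) (expKernel T w * z) := by
  rw [expKernel, map_mul, map_div₀, map_sub, ← exp_conj]
  simp only [map_mul, conj_I, conj_ofReal, map_one]
  rw [neg_mul, neg_mul, div_neg, ← neg_div, neg_sub]

lemma integral_comp_mul_div_mul_Ioi (g h : ℝ → ℝ) {T : ℝ} (hT : 0 < T) :
    ∫ w in Ioi 0, g (T * w) / w * h w = ∫ z in Ioi 0, g z / z * h (z / T) := by
  have hsub := integral_comp_mul_left_Ioi (fun z => g z / z * h (z / T)) 0 hT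
  rw [mul_zero, smul_eq_mul] at hsub
  rw [← mul_inv_cancel_left₀ hT.ne' (∫ z in Ioi 0, g z / z * h (z / T)), ← hsub,
    ← integral_const_mul]
  refine setIntegral_congr_fun measurableSet_Ioi fun w (hw : 0 < w) => ?_
  simp only [mul_div_cancel_left₀ w hT.ne']
  field_simp

lemma re_integral_expKernel_mul {φ : ℝ → ℂ} {T : ℝ} (hT : 0 < T)
    (hint : IntegrableOn (fun w => expKernel T w * φ w) (Ioi 0))
    (him : IntegrableOn (fun w => (φ w).im / w) (Ioi 0)) :
    (∫ w in Ioi 0, expKernel T w * φ w).re =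
      (∫ z in Ioi 0, Real.sin z / z * (φ (z / T)).re) +
        (∫ z in Ioi 0, Real.cos z / z * (φ (z / T)).im) - ∫ w in Ioi 0, (φ w).im / w := by
  set f₁ := fun w => Real.sin (T * w) / w * (φ w).re
  set f₂ := fun w => Real.cos (T * w) / w * (φ w).im
  have hsplit : (fun w => (expKernel T w * φ w).re) = fun w => f₁ w + f₂ w - (φ w).im / w :=
    funext fun w => re_expKernel_mul T w (φ w)
  have hf₂ : IntegrableOn f₂ (Ioi 0) := by
    have hcos : Continuous fun w => Real.cos (T * w) := by fun_prop
    refine (him.bdd_mul (c := 1) hcos.aestronglyMeasurable (ae_of_all _ fun w => ?_)).congr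
      (ae_of_all _ fun w => ?_)
    · simpa using Real.abs_cos_le_one (T * w)
    · simp only [f₂]
      ring
  have hre : IntegrableOn (fun w => (expKernel T w * φ w).re) (Ioi 0) := hint.re
  have hf₁ : IntegrableOn f₁ (Ioi 0) := by
    refine ((hre.sub hf₂).add him).congr (ae_of_all _ fun w => ?_)
    simp only [hsplit, Pi.add_apply, Pi.sub_apply]
    ring
  rw [← integral_comp_mul_div_mul_Ioi Real.sin (fun w => (φ w).re) hT,
    ← integral_comp_mul_div_mul_Ioi Real.cos (fun w => (φ w).im) hT,
    show (∫ w in Ioi 0, expKernel T w * φ w).re = ∫ w in Ioi 0, (expKernel T w * φ w).re by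
      simpa using (integral_re hint).symm,
    hsplit, integral_sub (f := fun w => f₁ w + f₂ w) (hf₁.add hf₂) him, integral_add hf₁ hf₂]

lemma Rad_eq_re_integral (D rr r0 k1 km1 T : ℝ) :
    Rad D rr r0 k1 km1 T =
      ((4 * rr * D * (∫ w in Ioi 0, expKernel T w * psiMC D rr r0 k1 km1 w).re : ℝ) : ℂ) := by
  simp only [Rad, expKernel_conj, integral_conj, ← expKernel.eq_1]
  rw [add_comm, add_conj]
  push_cast
  ring

lemma cpow_half_I_mul_ofReal {a : ℝ} (ha : 0 ≤ a) :
    (I * a) ^ ((1 : ℂ) / 2) = √(a / 2) * (1 + I) := by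
  have hre : (I * a).re = 0 := by simp
  have him : 0 ≤ (I * a).im := by simpa using ha
  rw [one_div]
  apply Complex.ext
  · simp [cpow_inv_two_re, hre, abs_of_nonneg ha]
  · simp [cpow_inv_two_im_eq_sqrt him, hre, abs_of_nonneg ha]

lemma norm_div_add_le_one {a b : ℂ} (h : 0 ≤ (a * (starRingEnd ℂ) b).re) :
    ‖a / (a + b)‖ ≤ 1 := by
  rw [norm_div]
  refine div_le_one_of_le₀ ?_ (norm_nonneg _)
  rw [← sq_le_sq₀ (norm_nonneg _) (norm_nonneg _), ← normSq_eq_norm_sq, ← normSq_eq_norm_sq,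
    normSq_add]
  nlinarith [normSq_nonneg b]

lemma exp_neg_le_two_div_sq {x : ℝ} (hx : 0 < x) : Real.exp (-x) ≤ 2 / x ^ 2 := by
  have h := Real.pow_div_factorial_le_exp x hx.le 2
  rw [Real.exp_neg, inv_le_comm₀ (Real.exp_pos x) (by positivity)]
  simpa using h

section

variable {D rr r0 k1 km1 : ℝ}

lemma betaMC_I_mul_re_nonneg (hD : 0 ≤ D) (hrr : 0 ≤ rr) (hk1 : 0 ≤ k1) (w : ℝ) :
    0 ≤ (betaMC D rr k1 km1 (I * w)).re := by
  simp only [betaMC, add_re, div_re, normSq_apply, mul_re, mul_im, add_im, I_re, I_im, ofReal_re,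
    ofReal_im, one_re]
  ring_nf
  positivity

lemma betaMC_I_mul_im_nonneg (hD : 0 ≤ D) (hk1 : 0 ≤ k1) (hkm1 : 0 ≤ km1) {w : ℝ} (hw : 0 ≤ w) :
    0 ≤ (betaMC D rr k1 km1 (I * w)).im := by
  simp only [betaMC, add_im, div_im, normSq_apply, mul_re, mul_im, add_re, I_re, I_im, ofReal_re,
    ofReal_im, one_im]
  ring_nf
  positivity

lemma measurable_psiMC : Measurable (psiMC D rr r0 k1 km1) := by
  unfold psiMC betaMC
  fun_prop

lemma norm_psiMC_le (hD : 0 ≤ D) (hrr : 0 ≤ rr) (hr0 : 0 ≤ r0) (hk1 : 0 ≤ k1) (hkm1 : 0 ≤ km1)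
    {w : ℝ} (hw : 0 ≤ w) :
    ‖psiMC D rr r0 k1 km1 w‖ ≤
      Real.exp (-((r0 - rr) * √(w / D / 2))) / (4 * Real.pi * r0 * D) := by
  set s := √(w / D / 2)
  have hσ : (I * w / D) ^ ((1 : ℂ) / 2) = s * (1 + I) := by
    rw [mul_div_assoc, ← ofReal_div]
    exact cpow_half_I_mul_ofReal (div_nonneg hw hD)
  set β := betaMC D rr k1 km1 (I * w)
  have hq : ‖β / (β + s * (1 + I))‖ ≤ 1 := by
    refine norm_div_add_le_one ?_
    have hre := betaMC_I_mul_re_nonneg (km1 := km1) hD hrr hk1 w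
    have him := betaMC_I_mul_im_nonneg (rr := rr) hD hk1 hkm1 hw
    have hs : 0 ≤ s := Real.sqrt_nonneg _
    simp only [map_mul, conj_ofReal, map_add, map_one, conj_I, mul_re, mul_im, ofReal_re,
      ofReal_im, add_re, add_im, one_re, one_im, neg_re, neg_im, I_re, I_im]
    nlinarith
  have hexp : ‖exp (-(r0 - rr : ℂ) * (s * (1 + I)))‖ = Real.exp (-((r0 - rr) * s)) := by
    rw [norm_exp]
    simp only [neg_sub, mul_re, sub_re, sub_im, ofReal_re, ofReal_im, add_re, add_im, one_re,
      one_im, I_re, I_im]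
    ring_nf
  have hc : ‖(4 * Real.pi * r0 * D : ℂ)‖ = 4 * Real.pi * r0 * D := by
    rw [show (4 * Real.pi * r0 * D : ℂ) = ((4 * Real.pi * r0 * D : ℝ) : ℂ) by push_cast; ring,
      norm_real, Real.norm_of_nonneg (by positivity)]
  rw [psiMC, hσ, norm_div, norm_mul, hexp, hc]
  gcongr
  exact mul_le_of_le_one_left (Real.exp_pos _).le hq

lemma norm_psiMC_le_const (hD : 0 ≤ D) (hrr : 0 ≤ rr) (hr0 : rr ≤ r0) (hk1 : 0 ≤ k1)
    (hkm1 : 0 ≤ km1) {w : ℝ} (hw : 0 ≤ w) :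
    ‖psiMC D rr r0 k1 km1 w‖ ≤ 1 / (4 * Real.pi * r0 * D) := by
  have hr0' : 0 ≤ r0 := hrr.trans hr0
  refine (norm_psiMC_le hD hrr hr0' hk1 hkm1 hw).trans ?_
  gcongr
  exact Real.exp_le_one_iff.2 (neg_nonpos.2 (mul_nonneg (sub_nonneg.2 hr0) (Real.sqrt_nonneg _)))

lemma norm_psiMC_le_inv (hD : 0 < D) (hrr : 0 ≤ rr) (hr0 : rr < r0) (hk1 : 0 ≤ k1)
    (hkm1 : 0 ≤ km1) {w : ℝ} (hw : 0 < w) :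
    ‖psiMC D rr r0 k1 km1 w‖ ≤ 1 / (Real.pi * r0 * (r0 - rr) ^ 2 * w) := by
  have hr0' : 0 < r0 := hrr.trans_lt hr0
  have hc : 0 < r0 - rr := sub_pos.2 hr0
  have hx : 0 < (r0 - rr) * √(w / D / 2) := by positivity
  have hsq : (r0 - rr) ^ 2 * √(w / D / 2) ^ 2 = (r0 - rr) ^ 2 * (w / D / 2) := by
    rw [Real.sq_sqrt (by positivity)]
  calc ‖psiMC D rr r0 k1 km1 w‖
      ≤ Real.exp (-((r0 - rr) * √(w / D / 2))) / (4 * Real.pi * r0 * D) :=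
        norm_psiMC_le hD.le hrr hr0'.le hk1 hkm1 hw.le
    _ ≤ 2 / ((r0 - rr) * √(w / D / 2)) ^ 2 / (4 * Real.pi * r0 * D) := by
        gcongr
        exact exp_neg_le_two_div_sq hx
    _ = 1 / (Real.pi * r0 * (r0 - rr) ^ 2 * w) := by
        rw [mul_pow, hsq]
        field_simp
        norm_num

lemma integrableOn_expKernel_mul_psiMC (hD : 0 < D) (hrr : 0 ≤ rr) (hr0 : rr < r0)
    (hk1 : 0 ≤ k1) (hkm1 : 0 ≤ km1) (T : ℝ) :
    IntegrableOn (fun w => expKernel T w * psiMC D rr r0 k1 km1 w) (Ioi 0) := by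
  have hmeas : Measurable fun w => expKernel T w * psiMC D rr r0 k1 km1 w :=
    (measurable_expKernel T).mul measurable_psiMC
  rw [← Ioc_union_Ioi_eq_Ioi zero_le_one]
  refine IntegrableOn.union ?_ ?_
  · refine Integrable.mono' (integrableOn_const (C := |T| * (1 / (4 * Real.pi * r0 * D)))
      measure_Ioc_lt_top.ne) hmeas.aestronglyMeasurable ?_
    refine (ae_restrict_iff' measurableSet_Ioc).2 (ae_of_all _ fun w hw => ?_)
    rw [norm_mul]
    exact mul_le_mul (norm_expKernel_le_abs T w)
      (norm_psiMC_le_const hD.le hrr hr0.le hk1 hkm1 hw.1.le) (norm_nonneg _) (abs_nonneg T)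
  · refine Integrable.mono' ((integrableOn_Ioi_rpow_of_lt (by norm_num : (-2 : ℝ) < -1)
      one_pos).const_mul (2 / (Real.pi * r0 * (r0 - rr) ^ 2))) hmeas.aestronglyMeasurable ?_
    refine (ae_restrict_iff' measurableSet_Ioi).2 (ae_of_all _ fun w (hw : 1 < w) => ?_)
    have hw0 : 0 < w := one_pos.trans hw
    rw [norm_mul, Real.rpow_neg hw0.le, Real.rpow_two]
    calc ‖expKernel T w‖ * ‖psiMC D rr r0 k1 km1 w‖
        ≤ 2 / |w| * (1 / (Real.pi * r0 * (r0 - rr) ^ 2 * w)) :=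
          mul_le_mul (norm_expKernel_le_two_div T w) (norm_psiMC_le_inv hD hrr hr0 hk1 hkm1 hw0)
            (norm_nonneg _) (by positivity)
      _ = 2 / (Real.pi * r0 * (r0 - rr) ^ 2) * (w ^ 2)⁻¹ := by
          rw [abs_of_pos hw0]
          field_simp

end

theorem lemma1_equilibrium_general (D rr r0 k1 km1 : ℝ)
    (hD : 0 < D) (hrr : 0 < rr) (hr0 : rr < r0) (hk1 : 0 ≤ k1) (hkm1 : 0 ≤ km1)
    (Ntx : ℕ)
    (h1 : IntegrableOn (fun w : ℝ => (psiMC D rr r0 k1 km1 w).im / w) (Set.Ioi 0))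
    (h3sin : Tendsto (fun T : ℝ =>
        ∫ z in Set.Ioi (0 : ℝ), (Real.sin z / z) * (psiMC D rr r0 k1 km1 (z / T)).re)
      atTop (nhds (Real.pi / 2 * (1 / (4 * Real.pi * r0 * D)))))
    (h3cos : Tendsto (fun T : ℝ =>
        ∫ z in Set.Ioi (0 : ℝ), (Real.cos z / z) * (psiMC D rr r0 k1 km1 (z / T)).im)
      atTop (nhds 0)) :
    Tendsto (fun T : ℝ => (Ntx : ℂ) * Rad D rr r0 k1 km1 T) atTop
      (nhds ((((Ntx : ℝ) * rr / (2 * r0) : ℝ) : ℂ) -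
        (((4 * (Ntx : ℝ) * rr * D *
            ∫ w in Set.Ioi (0 : ℝ), (psiMC D rr r0 k1 km1 w).im / w : ℝ)) : ℂ))) := by
  set C := ∫ w in Ioi 0, (psiMC D rr r0 k1 km1 w).im / w
  have hlim := (((h3sin.add h3cos).sub_const C).const_mul (4 * rr * D)).const_mul (Ntx : ℝ)
  have hval : (Ntx : ℝ) * (4 * rr * D * (Real.pi / 2 * (1 / (4 * Real.pi * r0 * D)) + 0 - C)) =
      Ntx * rr / (2 * r0) - 4 * Ntx * rr * D * C := by
    have : r0 ≠ 0 := (hrr.trans hr0).ne'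
    field_simp
    ring
  rw [hval] at hlim
  rw [← ofReal_sub]
  refine hlim.ofReal.congr' ?_
  filter_upwards [eventually_gt_atTop 0] with T hT
  rw [Rad_eq_re_integral, re_integral_expKernel_mul hT
    (integrableOn_expKernel_mul_psiMC hD hrr.le hr0 hk1 hkm1 T) h1]
  push_cast
  ring

/-- (Lemma 1) The expected cumulative number of adsorbed molecules `N_tx·R(T)` of the
reversible adsorption–desorption receiver converges, as `T → ∞`, to
`N_tx r_r/(2r₀) − 4 N_tx r_r D ∫₀^∞ Im(ψ(w))/w dw`. -/
theorem lemma1_equilibrium (D rr r0 k1 km1 : ℝ)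
    (hD : 0 < D) (hrr : 0 < rr) (hr0 : rr < r0) (hk1 : 0 ≤ k1) (hkm1 : 0 ≤ km1)
    (Ntx : ℕ)
    (h1 : IntegrableOn (fun w : ℝ => (psiMC D rr r0 k1 km1 w).im / w) (Set.Ioi 0))
    (h2cont : ContinuousWithinAt (psiMC D rr r0 k1 km1) (Set.Ici 0) 0)
    (h2val : psiMC D rr r0 k1 km1 0 = 1 / (4 * Real.pi * r0 * D))
    (h3sin : Tendsto (fun T : ℝ =>
        ∫ z in Set.Ioi (0 : ℝ), (Real.sin z / z) * (psiMC D rr r0 k1 km1 (z / T)).re)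
      atTop (nhds (Real.pi / 2 * (1 / (4 * Real.pi * r0 * D)))))
    (h3cos : Tendsto (fun T : ℝ =>
        ∫ z in Set.Ioi (0 : ℝ), (Real.cos z / z) * (psiMC D rr r0 k1 km1 (z / T)).im)
      atTop (nhds 0)) :
    Tendsto (fun T : ℝ => (Ntx : ℂ) * Rad D rr r0 k1 km1 T) atTop
      (nhds ((((Ntx : ℝ) * rr / (2 * r0) : ℝ) : ℂ) -
        (((4 * (Ntx : ℝ) * rr * D *
            ∫ w in Set.Ioi (0 : ℝ), (psiMC D rr r0 k1 km1 w).im / w : ℝ)) : ℂ))) :=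
  lemma1_equilibrium_general D rr r0 k1 km1 hD hrr hr0 hk1 hkm1 Ntx h1 h3sin h3cos
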